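/- arXiv:2107.02310 — 2 statements merged into one kernel-verified Lean document; each statement's English description precedes it below -/
import Mathlib

section
/- Let a = (a₁,a₂,a₃) and b = (b₁,b₂,b₃) be triplets of integers, each congruent to 1 mod 4, and let e₀, e₁ be integers such that e₁·a₁² + e₀·(a₂² − a₃²)/8 = 1 (as rational numbers; note 8 divides a₂² − a₃²). For an integer i set e_{1,i} = e₁ − e₀·i·(b₃ − b₂)(a₂ − a₃)/4. Then: (1) e_{1,i} is an integer (since 4 divides a₂ − a₃); (2) e_{1,i}·a₁² + e₀·(a_{i,2}² − a_{i,3}²)/8 = 1; and (3) e_{1,i}·b₁² + e₀·(b_{i,2}² − b_{i,3}²)/8 = e₁·b₁² + e₀·(b₂² − b₃²)/8. -/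
/-- With all entries of the triplets congruent to `1 mod 4` and
`e₁a₁² + e₀(a₂² − a₃²)/8 = 1`, the quantity
`e_{1,i} = e₁ − e₀ i (b₃ − b₂)(a₂ − a₃)/4` is an integer,
`e_{1,i}a₁² + e₀(a_{i,2}² − a_{i,3}²)/8 = 1`, and
`e_{1,i}b₁² + e₀(b_{i,2}² − b_{i,3}²)/8 = e₁b₁² + e₀(b₂² − b₃²)/8`,
where `aᵢ = (a₁, a₂ + a₁²(b₃−b₂)i, a₃ + a₁²(b₃−b₂)i)` and
`bᵢ = (b₁, b₂ + b₁²(a₃−a₂)i, b₃ + b₁²(a₃−a₂)i)`. -/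
theorem linking_form_invariance (a₁ a₂ a₃ b₁ b₂ b₃ e₀ e₁ : ℤ)
    (ha₁ : a₁ % 4 = 1) (ha₂ : a₂ % 4 = 1) (ha₃ : a₃ % 4 = 1)
    (hb₁ : b₁ % 4 = 1) (hb₂ : b₂ % 4 = 1) (hb₃ : b₃ % 4 = 1)
    (he : (e₁ : ℚ) * (a₁ : ℚ) ^ 2 + (e₀ : ℚ) * ((a₂ : ℚ) ^ 2 - (a₃ : ℚ) ^ 2) / 8 = 1) :
    ∀ i : ℤ,
      (∃ E : ℤ, (E : ℚ) =
        (e₁ : ℚ) - (e₀ : ℚ) * (i : ℚ) * ((b₃ : ℚ) - (b₂ : ℚ)) * ((a₂ : ℚ) - (a₃ : ℚ)) / 4) ∧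
      ((e₁ : ℚ) - (e₀ : ℚ) * (i : ℚ) * ((b₃ : ℚ) - (b₂ : ℚ)) * ((a₂ : ℚ) - (a₃ : ℚ)) / 4)
            * (a₁ : ℚ) ^ 2
          + (e₀ : ℚ) *
            (((a₂ : ℚ) + (a₁ : ℚ) ^ 2 * ((b₃ : ℚ) - (b₂ : ℚ)) * (i : ℚ)) ^ 2
              - ((a₃ : ℚ) + (a₁ : ℚ) ^ 2 * ((b₃ : ℚ) - (b₂ : ℚ)) * (i : ℚ)) ^ 2) / 8 = 1 ∧
      ((e₁ : ℚ) - (e₀ : ℚ) * (i : ℚ) * ((b₃ : ℚ) - (b₂ : ℚ)) * ((a₂ : ℚ) - (a₃ : ℚ)) / 4)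
            * (b₁ : ℚ) ^ 2
          + (e₀ : ℚ) *
            (((b₂ : ℚ) + (b₁ : ℚ) ^ 2 * ((a₃ : ℚ) - (a₂ : ℚ)) * (i : ℚ)) ^ 2
              - ((b₃ : ℚ) + (b₁ : ℚ) ^ 2 * ((a₃ : ℚ) - (a₂ : ℚ)) * (i : ℚ)) ^ 2) / 8
        = (e₁ : ℚ) * (b₁ : ℚ) ^ 2 + (e₀ : ℚ) * ((b₂ : ℚ) ^ 2 - (b₃ : ℚ) ^ 2) / 8 := by
  intro i
  refine ⟨?_, by linear_combination he, by ring⟩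
  obtain ⟨k, hk⟩ : (4 : ℤ) ∣ a₂ - a₃ := by omega
  refine ⟨e₁ - e₀ * i * (b₃ - b₂) * k, ?_⟩
  have : (a₂ : ℚ) - a₃ = 4 * k := by exact_mod_cast congrArg (Int.cast : ℤ → ℚ) hk
  push_cast
  rw [this]; ring
end

section
/- Let a = (a₁,a₂,a₃) and b = (b₁,b₂,b₃) be triplets of integers, each congruent to 1 mod 4. Define A = (1/8)·(a₁²(b₂² + b₃² + 8) − b₁²(a₂² + a₃² + 8)), B = (1/4)·(a₁²·b₁²(b₂+b₃)(a₃−a₂) − b₁²·a₁²(a₂+a₃)(b₃−b₂)), and C = (1/4)·(a₁²·b₁⁴(a₃−a₂)² − b₁²·a₁⁴(b₃−b₂)²). Then A, B, C are integers, and for every integer i, (1/8)·(a₁²(b_{i,2}² + b_{i,3}² + 8) − b₁²(a_{i,2}² + a_{i,3}² + 8)) = A + B·i + C·i²; that is, a₁²b₁²·m(aᵢ,bᵢ) = A + B·i + C·i². -/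
/-- With all entries of the triplets congruent to `1 mod 4`, the quantities
`A = (1/8)(a₁²(b₂² + b₃² + 8) − b₁²(a₂² + a₃² + 8))`,
`B = (1/4)(a₁²b₁²(b₂+b₃)(a₃−a₂) − b₁²a₁²(a₂+a₃)(b₃−b₂))` and
`C = (1/4)(a₁²b₁⁴(a₃−a₂)² − b₁²a₁⁴(b₃−b₂)²)` are integers, and
`(1/8)(a₁²(b_{i,2}² + b_{i,3}² + 8) − b₁²(a_{i,2}² + a_{i,3}² + 8)) = A + Bi + Ci²`,
i.e. `a₁²b₁² m(aᵢ,bᵢ) = A + Bi + Ci²`, for every integer `i`, where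
`aᵢ = (a₁, a₂ + a₁²(b₃−b₂)i, a₃ + a₁²(b₃−b₂)i)` and
`bᵢ = (b₁, b₂ + b₁²(a₃−a₂)i, b₃ + b₁²(a₃−a₂)i)`. -/
theorem m_quadratic_in_i (a₁ a₂ a₃ b₁ b₂ b₃ : ℤ)
    (ha₁ : a₁ % 4 = 1) (ha₂ : a₂ % 4 = 1) (ha₃ : a₃ % 4 = 1)
    (hb₁ : b₁ % 4 = 1) (hb₂ : b₂ % 4 = 1) (hb₃ : b₃ % 4 = 1) :
    (∃ A : ℤ, (A : ℚ) =
      ((a₁ : ℚ) ^ 2 * ((b₂ : ℚ) ^ 2 + (b₃ : ℚ) ^ 2 + 8)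
        - (b₁ : ℚ) ^ 2 * ((a₂ : ℚ) ^ 2 + (a₃ : ℚ) ^ 2 + 8)) / 8) ∧
    (∃ B : ℤ, (B : ℚ) =
      ((a₁ : ℚ) ^ 2 * (b₁ : ℚ) ^ 2 * ((b₂ : ℚ) + (b₃ : ℚ)) * ((a₃ : ℚ) - (a₂ : ℚ))
        - (b₁ : ℚ) ^ 2 * (a₁ : ℚ) ^ 2 * ((a₂ : ℚ) + (a₃ : ℚ)) * ((b₃ : ℚ) - (b₂ : ℚ))) / 4) ∧
    (∃ C : ℤ, (C : ℚ) =
      ((a₁ : ℚ) ^ 2 * (b₁ : ℚ) ^ 4 * ((a₃ : ℚ) - (a₂ : ℚ)) ^ 2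
        - (b₁ : ℚ) ^ 2 * (a₁ : ℚ) ^ 4 * ((b₃ : ℚ) - (b₂ : ℚ)) ^ 2) / 4) ∧
    ∀ i : ℤ,
      ((a₁ : ℚ) ^ 2 *
          (((b₂ : ℚ) + (b₁ : ℚ) ^ 2 * ((a₃ : ℚ) - (a₂ : ℚ)) * (i : ℚ)) ^ 2
            + ((b₃ : ℚ) + (b₁ : ℚ) ^ 2 * ((a₃ : ℚ) - (a₂ : ℚ)) * (i : ℚ)) ^ 2 + 8)
        - (b₁ : ℚ) ^ 2 *
          (((a₂ : ℚ) + (a₁ : ℚ) ^ 2 * ((b₃ : ℚ) - (b₂ : ℚ)) * (i : ℚ)) ^ 2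
            + ((a₃ : ℚ) + (a₁ : ℚ) ^ 2 * ((b₃ : ℚ) - (b₂ : ℚ)) * (i : ℚ)) ^ 2 + 8)) / 8
      = ((a₁ : ℚ) ^ 2 * ((b₂ : ℚ) ^ 2 + (b₃ : ℚ) ^ 2 + 8)
          - (b₁ : ℚ) ^ 2 * ((a₂ : ℚ) ^ 2 + (a₃ : ℚ) ^ 2 + 8)) / 8
        + (((a₁ : ℚ) ^ 2 * (b₁ : ℚ) ^ 2 * ((b₂ : ℚ) + (b₃ : ℚ)) * ((a₃ : ℚ) - (a₂ : ℚ))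
          - (b₁ : ℚ) ^ 2 * (a₁ : ℚ) ^ 2 * ((a₂ : ℚ) + (a₃ : ℚ)) * ((b₃ : ℚ) - (b₂ : ℚ))) / 4)
          * (i : ℚ)
        + (((a₁ : ℚ) ^ 2 * (b₁ : ℚ) ^ 4 * ((a₃ : ℚ) - (a₂ : ℚ)) ^ 2
          - (b₁ : ℚ) ^ 2 * (a₁ : ℚ) ^ 4 * ((b₃ : ℚ) - (b₂ : ℚ)) ^ 2) / 4) * (i : ℚ) ^ 2 := by
  obtain ⟨k₁, hk₁⟩ : ∃ k, a₁ = 4*k+1 := ⟨a₁/4, by omega⟩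
  obtain ⟨k₂, hk₂⟩ : ∃ k, a₂ = 4*k+1 := ⟨a₂/4, by omega⟩
  obtain ⟨k₃, hk₃⟩ : ∃ k, a₃ = 4*k+1 := ⟨a₃/4, by omega⟩
  obtain ⟨k₄, hk₄⟩ : ∃ k, b₁ = 4*k+1 := ⟨b₁/4, by omega⟩
  obtain ⟨k₅, hk₅⟩ : ∃ k, b₂ = 4*k+1 := ⟨b₂/4, by omega⟩
  obtain ⟨k₆, hk₆⟩ : ∃ k, b₃ = 4*k+1 := ⟨b₃/4, by omega⟩
  refine ⟨⟨(2*k₁^2+k₁)*(8*(2*k₅^2+k₅)+8*(2*k₆^2+k₆)+10) + (2*k₅^2+k₅) + (2*k₆^2+k₆)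
      - ((2*k₄^2+k₄)*(8*(2*k₂^2+k₂)+8*(2*k₃^2+k₃)+10) + (2*k₂^2+k₂) + (2*k₃^2+k₃)), ?_⟩,
    ⟨a₁^2*b₁^2*(b₂+b₃)*(k₃-k₂) - b₁^2*a₁^2*(a₂+a₃)*(k₆-k₅), ?_⟩,
    ⟨a₁^2*b₁^4*(4*(k₃-k₂)^2) - b₁^2*a₁^4*(4*(k₆-k₅)^2), ?_⟩, ?_⟩
  · subst hk₁ hk₂ hk₃ hk₄ hk₅ hk₆; push_cast; ring
  · subst hk₁ hk₂ hk₃ hk₄ hk₅ hk₆; push_cast; ring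
  · subst hk₁ hk₂ hk₃ hk₄ hk₅ hk₆; push_cast; ring
  · intro i; ring
end
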